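/- arXiv:2108.10936 — 5 statements merged into one kernel-verified Lean document; each statement's English description precedes it below -/
import Mathlib

section
/- For every packing bound function A and every bounded Borel subset C of ℝ^d, pack(C) ≤ A(C). -/
open scoped Pointwise
open MeasureTheory Bornology Filter

/-- A packing bound function: an assignment of a nonnegative real number to every bounded
Borel subset of every Euclidean space, satisfying the sphere bound, Lipschitz, union,
and mesh axioms. -/
structure PackingBoundFunction where
  toFun : ∀ d : ℕ, Set (EuclideanSpace ℝ (Fin d)) → ℝ
  nonneg : ∀ (d : ℕ) (C : Set (EuclideanSpace ℝ (Fin d))),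
    IsBounded C → MeasurableSet C → 0 ≤ toFun d C
  sphere_bound : ∀ (d : ℕ) (C : Set (EuclideanSpace ℝ (Fin d))),
    IsBounded C → MeasurableSet C → C.Nonempty →
    (∃ z, C ⊆ Metric.ball z 1) → toFun d C = 1
  lipschitz : ∀ (d d' : ℕ) (C : Set (EuclideanSpace ℝ (Fin d)))
    (C' : Set (EuclideanSpace ℝ (Fin d'))),
    IsBounded C → MeasurableSet C → IsBounded C' → MeasurableSet C' →
    (∃ ψ : EuclideanSpace ℝ (Fin d) → EuclideanSpace ℝ (Fin d'),
      (∀ x ∈ C, ψ x ∈ C') ∧ ∀ x ∈ C, ∀ y ∈ C, dist x y ≤ dist (ψ x) (ψ y)) →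
    toFun d C ≤ toFun d' C'
  union : ∀ (d : ℕ) (C C' : Set (EuclideanSpace ℝ (Fin d))),
    IsBounded C → MeasurableSet C → IsBounded C' → MeasurableSet C' →
    (∀ x ∈ C, ∀ x' ∈ C', 2 ≤ dist x x') →
    toFun d (C ∪ C') = toFun d C + toFun d C'
  mesh : ∀ (ε : ℝ), 0 < ε → ∀ (d : ℕ) (C C' : Set (EuclideanSpace ℝ (Fin d))),
    IsBounded C → MeasurableSet C → IsBounded C' → MeasurableSet C' →
    C ⊆ Metric.thickening ε C' →
    toFun d ((1 / (1 + ε)) • C) ≤ toFun d C'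

/-- `pack C` is the largest cardinality of a subset of `C` with pairwise distances at least 2. -/
noncomputable def pack (d : ℕ) (C : Set (EuclideanSpace ℝ (Fin d))) : ℕ :=
  sSup {m : ℕ | ∃ X : Finset (EuclideanSpace ℝ (Fin d)),
    ↑X ⊆ C ∧ (∀ x ∈ X, ∀ y ∈ X, x ≠ y → 2 ≤ dist x y) ∧ X.card = m}

lemma packingBound_finset (A : PackingBoundFunction) (d : ℕ)
    (X : Finset (EuclideanSpace ℝ (Fin d)))
    (hX : ∀ x ∈ X, ∀ y ∈ X, x ≠ y → 2 ≤ dist x y) :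
    A.toFun d ↑X = X.card := by
  classical
  induction X using Finset.induction_on with
  | empty =>
    have h := A.union d ∅ ∅ (by simp) (by simp) (by simp) (by simp) (by simp)
    simp only [Set.empty_union] at h
    have h0 : A.toFun d (∅ : Set (EuclideanSpace ℝ (Fin d))) = 0 := by linarith
    rw [Finset.coe_empty, h0, Finset.card_empty, Nat.cast_zero]
  | @insert a s ha ih =>
    have hs : ∀ x ∈ s, ∀ y ∈ s, x ≠ y → 2 ≤ dist x y := fun x hx y hy =>
      hX x (Finset.mem_insert_of_mem hx) y (Finset.mem_insert_of_mem hy)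
    have hsep : ∀ x ∈ ({a} : Set (EuclideanSpace ℝ (Fin d))), ∀ y ∈ (↑s : Set (EuclideanSpace ℝ (Fin d))), 2 ≤ dist x y := by
      rintro x rfl y hy
      exact hX x (Finset.mem_insert_self _ _) y (Finset.mem_insert_of_mem hy)
        (fun h => ha (h ▸ hy))
    have hcoe : (↑(insert a s) : Set (EuclideanSpace ℝ (Fin d))) = {a} ∪ ↑s := by
      rw [Finset.coe_insert, Set.insert_eq]
    have hu := A.union d {a} ↑s isBounded_singleton (measurableSet_singleton a)
      s.finite_toSet.isBounded s.finite_toSet.measurableSet hsep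
    have h1 : A.toFun d {a} = 1 :=
      A.sphere_bound d {a} isBounded_singleton (measurableSet_singleton a)
        ⟨a, rfl⟩ ⟨a, by simp [Metric.ball]⟩
    rw [hcoe, hu, h1, ih hs, Finset.card_insert_of_notMem ha]
    push_cast
    ring

/-- Every packing bound function dominates `pack` on bounded Borel sets. -/
theorem pack_le_packingBoundFunction (A : PackingBoundFunction) (d : ℕ)
    (C : Set (EuclideanSpace ℝ (Fin d))) (hCb : IsBounded C) (hCm : MeasurableSet C) :
    (pack d C : ℝ) ≤ A.toFun d C := by
  classical
  have key : ∀ m ∈ {m : ℕ | ∃ X : Finset (EuclideanSpace ℝ (Fin d)),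
      ↑X ⊆ C ∧ (∀ x ∈ X, ∀ y ∈ X, x ≠ y → 2 ≤ dist x y) ∧ X.card = m},
      (m : ℝ) ≤ A.toFun d C := by
    rintro m ⟨X, hXC, hsep, rfl⟩
    rw [← packingBound_finset A d X hsep]
    exact A.lipschitz d d ↑X C X.finite_toSet.isBounded X.finite_toSet.measurableSet hCb hCm
      ⟨id, fun x hx => hXC hx, fun x _ y _ => le_refl _⟩
  have hne : (0:ℕ) ∈ {m : ℕ | ∃ X : Finset (EuclideanSpace ℝ (Fin d)),
      ↑X ⊆ C ∧ (∀ x ∈ X, ∀ y ∈ X, x ≠ y → 2 ≤ dist x y) ∧ X.card = m} :=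
    ⟨∅, by simp⟩
  have hle : pack d C ≤ ⌊A.toFun d C⌋₊ :=
    csSup_le ⟨0, hne⟩ (fun m hm => Nat.le_floor (key m hm))
  calc (pack d C : ℝ) ≤ (⌊A.toFun d C⌋₊ : ℝ) := Nat.cast_le.2 hle
    _ ≤ A.toFun d C := Nat.floor_le (A.nonneg d C hCb hCm)
end

section
/- Let A be a packing bound function. If C and C' are bounded Borel subsets of the same ambient space ℝ^d, then A(C ∪ C') ≤ A(C) + A(C'). -/
/-!
Place `C` at height `0` and `C'` at height `2` in `ℝ^(d+1)`, sending a point of `C ∩ C'` to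
height `0`. This map does not decrease distances, so the Lipschitz axiom bounds `A(C ∪ C')` by
`A` of the two lifted copies; these are `2`-separated, so the union axiom splits that value into
the sum of their values. Finally, applying the Lipschitz axiom in both directions shows that
`A` is invariant under isometric embeddings, so each lifted copy has the value of the original.
-/

open scoped Pointwise
open MeasureTheory Bornology Filter

theorem Isometry.measurableSet_image {α β : Type*} [EMetricSpace α] [CompleteSpace α]
    [MeasurableSpace α] [BorelSpace α] [EMetricSpace β] [MeasurableSpace β] [BorelSpace β]
    {f : α → β} (hf : Isometry f) {s : Set α} (hs : MeasurableSet s) :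
    MeasurableSet (f '' s) :=
  hf.isClosedEmbedding.measurableEmbedding.measurableSet_image.2 hs

namespace EuclideanSpace

noncomputable def embedAtHeight (d : ℕ) (c : ℝ) (x : EuclideanSpace ℝ (Fin d)) :
    EuclideanSpace ℝ (Fin (d + 1)) :=
  WithLp.toLp 2 (Fin.snoc (α := fun _ => ℝ) (fun i => x i) c)

theorem dist_embedAtHeight_sq (d : ℕ) (c c' : ℝ) (x y : EuclideanSpace ℝ (Fin d)) :
    dist (embedAtHeight d c x) (embedAtHeight d c' y) ^ 2 = dist x y ^ 2 + (c - c') ^ 2 := by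
  rw [EuclideanSpace.dist_eq, EuclideanSpace.dist_eq, Real.sq_sqrt (by positivity),
    Real.sq_sqrt (by positivity), Fin.sum_univ_castSucc]
  simp [embedAtHeight, Real.dist_eq]

theorem dist_le_dist_embedAtHeight (d : ℕ) (c c' : ℝ) (x y : EuclideanSpace ℝ (Fin d)) :
    dist x y ≤ dist (embedAtHeight d c x) (embedAtHeight d c' y) :=
  le_of_sq_le_sq (by rw [dist_embedAtHeight_sq]; nlinarith [sq_nonneg (c - c')]) dist_nonneg

theorem abs_sub_le_dist_embedAtHeight (d : ℕ) (c c' : ℝ) (x y : EuclideanSpace ℝ (Fin d)) :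
    |c - c'| ≤ dist (embedAtHeight d c x) (embedAtHeight d c' y) :=
  abs_le_of_sq_le_sq (by rw [dist_embedAtHeight_sq]; nlinarith [sq_nonneg (dist x y)]) dist_nonneg

theorem isometry_embedAtHeight (d : ℕ) (c : ℝ) : Isometry (embedAtHeight d c) :=
  Isometry.of_dist_eq fun x y =>
    (pow_left_inj₀ dist_nonneg dist_nonneg two_ne_zero).1 (by simp [dist_embedAtHeight_sq])

end EuclideanSpace

namespace PackingBoundFunction

variable (A : PackingBoundFunction) {d d' : ℕ}

theorem toFun_image_of_isometry {f : EuclideanSpace ℝ (Fin d) → EuclideanSpace ℝ (Fin d')}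
    (hf : Isometry f) {C : Set (EuclideanSpace ℝ (Fin d))} (hCb : IsBounded C)
    (hCm : MeasurableSet C) : A.toFun d' (f '' C) = A.toFun d C := by
  have hfCb : IsBounded (f '' C) := hf.lipschitz.isBounded_image hCb
  have hfCm : MeasurableSet (f '' C) := hf.measurableSet_image hCm
  have hinv : ∀ x, Function.invFun f (f x) = x := Function.leftInverse_invFun hf.injective
  apply le_antisymm
  · refine A.lipschitz _ _ _ _ hfCb hfCm hCb hCm ⟨Function.invFun f, ?_, ?_⟩
    · rintro _ ⟨x, hx, rfl⟩
      rwa [hinv]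
    · rintro _ ⟨x, -, rfl⟩ _ ⟨y, -, rfl⟩
      rw [hinv, hinv, hf.dist_eq]
  · exact A.lipschitz _ _ _ _ hCb hCm hfCb hfCm
      ⟨f, fun x hx => ⟨x, hx, rfl⟩, fun x _ y _ => (hf.dist_eq x y).ge⟩

end PackingBoundFunction

open EuclideanSpace in
/-- The union bound: `A(C ∪ C') ≤ A(C) + A(C')` for bounded Borel subsets
of the same Euclidean space. -/
theorem packingBoundFunction_union_bound (A : PackingBoundFunction) (d : ℕ)
    (C C' : Set (EuclideanSpace ℝ (Fin d)))
    (hCb : IsBounded C) (hCm : MeasurableSet C)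
    (hC'b : IsBounded C') (hC'm : MeasurableSet C') :
    A.toFun d (C ∪ C') ≤ A.toFun d C + A.toFun d C' := by
  classical
  set D := embedAtHeight d 0 '' C
  set D' := embedAtHeight d 2 '' C'
  have hDb : IsBounded D := (isometry_embedAtHeight d 0).lipschitz.isBounded_image hCb
  have hD'b : IsBounded D' := (isometry_embedAtHeight d 2).lipschitz.isBounded_image hC'b
  have hDm : MeasurableSet D := (isometry_embedAtHeight d 0).measurableSet_image hCm
  have hD'm : MeasurableSet D' := (isometry_embedAtHeight d 2).measurableSet_image hC'm
  have hsep : ∀ z ∈ D, ∀ z' ∈ D', 2 ≤ dist z z' := by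
    rintro _ ⟨x, -, rfl⟩ _ ⟨y, -, rfl⟩
    simpa using abs_sub_le_dist_embedAtHeight d 0 2 x y
  have hlift : ∀ x ∈ C ∪ C', embedAtHeight d (if x ∈ C then 0 else 2) x ∈ D ∪ D' := by
    intro x hx
    by_cases h : x ∈ C
    · simpa [h] using Or.inl ⟨x, h, rfl⟩
    · simpa [h] using Or.inr ⟨x, hx.resolve_left h, rfl⟩
  calc A.toFun d (C ∪ C') ≤ A.toFun (d + 1) (D ∪ D') :=
        A.lipschitz _ _ _ _ (hCb.union hC'b) (hCm.union hC'm) (hDb.union hD'b) (hDm.union hD'm)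
          ⟨_, hlift, fun x _ y _ => dist_le_dist_embedAtHeight d _ _ x y⟩
    _ = A.toFun (d + 1) D + A.toFun (d + 1) D' := A.union _ _ _ hDb hDm hD'b hD'm hsep
    _ = A.toFun d C + A.toFun d C' := by
        rw [A.toFun_image_of_isometry (isometry_embedAtHeight d 0) hCb hCm,
          A.toFun_image_of_isometry (isometry_embedAtHeight d 2) hC'b hC'm]
end

section
/- The function pack satisfies the Euclidean bound: for every n ≥ 1 and every bounded Borel subset C of ℝ^n, pack(C) ≥ δ_{pack,n} · L_n(C), where L_n is Lebesgue measure on ℝ^n and δ_{pack,n} is the limit as k → ∞ of pack(2^k·[0,1]^n)/2^{kn}. -/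
/-
Repeat an optimal packing `X` of the cube `s • [0,1]^n` periodically along the lattice
`(s + 2) ℤ^n`: the margin of width 2 keeps the result a packing of `ℝ^n`. Each translate of this
periodic packing meets `C` in a packing of `C`, hence in at most `pack C` points, while averaging
the number of its points in `C` over a fundamental domain of the lattice gives
`|X| vol C / (s + 2)^n`. So `pack (s • [0,1]^n) * vol C ≤ pack C * (s + 2)^n`, and dividing by
`s^n` with `s = 2^k → ∞` bounds the density.
-/

open scoped Pointwise
open MeasureTheory Bornology Filter

/-- The unit cube `[0,1]^n` in `ℝ^n`. -/
def unitCube (n : ℕ) : Set (EuclideanSpace ℝ (Fin n)) :=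
  {x | ∀ i, x i ∈ Set.Icc (0 : ℝ) 1}

/-- `δ_{pack,n}`: the limit of `pack(2^k·[0,1]^n)/2^{kn}` (expressed as a `limsup`, which
coincides with the limit since the latter exists). -/
noncomputable def packDensity (n : ℕ) : ℝ :=
  Filter.limsup (fun k : ℕ => (pack n ((2 : ℝ) ^ k • unitCube n) : ℝ) / 2 ^ (k * n))
    Filter.atTop

open Metric Submodule
open scoped ENNReal NNReal Topology

variable {n : ℕ} {C : Set (EuclideanSpace ℝ (Fin n))}

lemma bddAbove_packing_cards (hC : IsBounded C) :
    BddAbove {m : ℕ | ∃ X : Finset (EuclideanSpace ℝ (Fin n)),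
      ↑X ⊆ C ∧ (∀ x ∈ X, ∀ y ∈ X, x ≠ y → 2 ≤ dist x y) ∧ X.card = m} := by
  obtain ⟨N, -, hNfin, hNcover⟩ := exists_finite_isCover_of_totallyBounded (ε := 2⁻¹)
    (by norm_num) (hC.isCompact_closure.totallyBounded.subset subset_closure)
  refine ⟨N.ncard, ?_⟩
  rintro _ ⟨X, hXC, hX, rfl⟩
  have hsep : IsSeparated ((2 * 2⁻¹ : ℝ≥0) : ℝ≥0∞) (X : Set (EuclideanSpace ℝ (Fin n))) :=
    fun x hx y hy hxy => by
      show ((2 * 2⁻¹ : ℝ≥0) : ℝ≥0∞) < edist x y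
      rw [edist_dist]
      norm_num [ENNReal.one_lt_ofReal]
      linarith [hX x hx y hy hxy]
  have := (hsep.encard_le_packingNumber hXC).trans
    ((packingNumber_two_mul_le_externalCoveringNumber _ C).trans
      hNcover.externalCoveringNumber_le_encard)
  rw [Set.encard_coe_eq_coe_finsetCard, ← hNfin.cast_ncard_eq] at this
  exact_mod_cast this

lemma card_le_pack (hC : IsBounded C) {X : Finset (EuclideanSpace ℝ (Fin n))} (hXC : ↑X ⊆ C)
    (hX : (X : Set (EuclideanSpace ℝ (Fin n))).Pairwise (2 ≤ dist · ·)) : X.card ≤ pack n C :=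
  le_csSup (bddAbove_packing_cards hC) ⟨X, hXC, hX, rfl⟩

lemma exists_card_eq_pack (hC : IsBounded C) :
    ∃ X : Finset (EuclideanSpace ℝ (Fin n)), ↑X ⊆ C ∧
      (X : Set (EuclideanSpace ℝ (Fin n))).Pairwise (2 ≤ dist · ·) ∧ X.card = pack n C := by
  unfold pack
  refine Nat.sSup_mem ?_ (bddAbove_packing_cards hC)
  exact ⟨0, ∅, by simp, by simp, rfl⟩

lemma tsum_indicator_le_pack {ι : Type*} {f : ι → EuclideanSpace ℝ (Fin n)}
    (hf : Pairwise fun i j => 2 ≤ dist (f i) (f j)) (hC : IsBounded C) :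
    ∑' i, C.indicator 1 (f i) ≤ (pack n C : ℝ≥0∞) := by
  classical
  have hinj : f.Injective := fun i j hij => by
    by_contra hne
    have : (2 : ℝ) ≤ dist (f i) (f j) := hf hne
    rw [hij, dist_self] at this
    norm_num at this
  rw [ENNReal.tsum_eq_iSup_sum]
  refine iSup_le fun s => ?_
  have hcard : ∑ i ∈ s, C.indicator 1 (f i) = (((s.filter (f · ∈ C)).image f).card : ℝ≥0∞) := by
    rw [Finset.card_image_of_injective _ hinj, Finset.natCast_card_filter]
    simp [Set.indicator_apply]
  rw [hcard, Nat.cast_le]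
  refine card_le_pack hC ?_ ?_ <;> rw [Finset.coe_image]
  · exact Set.image_subset_iff.2 fun i hi => (Finset.mem_filter.1 hi).2
  exact (hinj.injOn.pairwise_image).2 fun i _ j _ hij => hf hij

theorem card_mul_volume_le_pack_mul_volume_fundamentalDomain {ι : Type*} [Finite ι]
    (b : Module.Basis ι ℝ (EuclideanSpace ℝ (Fin n))) {X : Finset (EuclideanSpace ℝ (Fin n))}
    (hX : Pairwise fun q q' : X × span ℤ (Set.range b) =>
      2 ≤ dist ((q.1 : EuclideanSpace ℝ (Fin n)) + q.2) (q'.1 + q'.2))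
    (hCb : IsBounded C) (hCm : MeasurableSet C) :
    X.card * volume C ≤ pack n C * volume (ZSpan.fundamentalDomain b) := by
  set Λ := span ℤ (Set.range b)
  set D := ZSpan.fundamentalDomain b
  have hD := ZSpan.isAddFundamentalDomain b volume
  have : VAddInvariantMeasure Λ (EuclideanSpace ℝ (Fin n)) volume :=
    inferInstanceAs (VAddInvariantMeasure Λ.toAddSubgroup _ _)
  have hF : Measurable (C.indicator (1 : EuclideanSpace ℝ (Fin n) → ℝ≥0∞)) :=
    measurable_one.indicator hCm
  have htile : ∀ p : EuclideanSpace ℝ (Fin n),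
      volume C = ∑' g : Λ, ∫⁻ x in D, C.indicator 1 (p + (g + x)) := fun p => by
    rw [← lintegral_indicator_one hCm, ← lintegral_add_left_eq_self _ p,
      hD.lintegral_eq_tsum'']
    rfl
  calc (X.card : ℝ≥0∞) * volume C = ∑' p : X, volume C := by simp
    _ = ∑' q : X × Λ, ∫⁻ x in D, C.indicator 1 (q.1 + q.2 + x) := by
      rw [ENNReal.tsum_prod']
      exact tsum_congr fun p => (htile p).trans (by simp only [add_assoc])
    _ = ∫⁻ x in D, ∑' q : X × Λ, C.indicator 1 (q.1 + q.2 + x) :=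
      (lintegral_tsum fun q => (hF.comp (measurable_const_add _)).aemeasurable).symm
    _ ≤ ∫⁻ _ in D, (pack n C : ℝ≥0∞) :=
      lintegral_mono fun x => tsum_indicator_le_pack
        (fun q q' hqq' => by simpa only [dist_add_right] using hX hqq') hCb
    _ = pack n C * volume D := setLIntegral_const _ _

lemma isBounded_unitCube : IsBounded (unitCube n) := by
  have : unitCube n = EuclideanSpace.equiv (Fin n) ℝ ⁻¹' Set.Icc 0 1 := by
    ext x
    simp [unitCube, Pi.le_def, forall_and]
  rw [this]
  exact (EuclideanSpace.equiv (Fin n) ℝ).antilipschitz.isBounded_preimage (isBounded_Icc 0 1)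

lemma mem_Icc_of_mem_smul_unitCube {s : ℝ} (hs : 0 ≤ s) {x : EuclideanSpace ℝ (Fin n)}
    (hx : x ∈ s • unitCube n) (i : Fin n) : x i ∈ Set.Icc 0 s := by
  obtain ⟨y, hy, rfl⟩ := hx
  exact ⟨mul_nonneg hs (hy i).1, mul_le_of_le_one_right hs (hy i).2⟩

noncomputable def cubeBasis (n : ℕ) {L : ℝ} (hL : L ≠ 0) :
    Module.Basis (Fin n) ℝ (EuclideanSpace ℝ (Fin n)) :=
  (EuclideanSpace.basisFun (Fin n) ℝ).toBasis.isUnitSMul fun _ => hL.isUnit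

lemma cubeBasis_repr {L : ℝ} (hL : L ≠ 0) (x : EuclideanSpace ℝ (Fin n)) (i : Fin n) :
    (cubeBasis n hL).repr x i = L⁻¹ * x i := by
  simp [cubeBasis, Module.Basis.repr_isUnitSMul, Units.smul_def]

lemma volume_fundamentalDomain_cubeBasis {L : ℝ} (hL : L ≠ 0) :
    volume (ZSpan.fundamentalDomain (cubeBasis n hL)) = ENNReal.ofReal (|L| ^ n) := by
  set b₀ := EuclideanSpace.basisFun (Fin n) ℝ
  rw [ZSpan.measure_fundamentalDomain _ volume b₀.toBasis,
    measure_congr (ZSpan.fundamentalDomain_ae_parallelepiped b₀.toBasis volume),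
    OrthonormalBasis.coe_toBasis, b₀.volume_parallelepiped, mul_one, cubeBasis,
    Module.Basis.det_isUnitSMul]
  simp

lemma exists_le_abs_sub_of_mem_span_cubeBasis {L : ℝ} (hL : L ≠ 0)
    {g g' : EuclideanSpace ℝ (Fin n)} (hg : g ∈ span ℤ (Set.range (cubeBasis n hL)))
    (hg' : g' ∈ span ℤ (Set.range (cubeBasis n hL))) (hne : g ≠ g') :
    ∃ i, |L| ≤ |g i - g' i| := by
  obtain ⟨i, hi⟩ : ∃ i, g i - g' i ≠ 0 := by
    by_contra! h
    exact hne (PiLp.ext fun i => sub_eq_zero.1 (h i))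
  obtain ⟨k, hk⟩ := ((cubeBasis n hL).mem_span_iff_repr_mem ℤ _).1 (sub_mem hg hg') i
  rw [cubeBasis_repr, PiLp.sub_apply, eq_inv_mul_iff_mul_eq₀ hL, algebraMap_int_eq,
    eq_intCast] at hk
  refine ⟨i, ?_⟩
  rw [← hk, abs_mul]
  rw [← hk] at hi
  have hk0 : k ≠ 0 := by rintro rfl; simp at hi
  exact le_mul_of_one_le_right (abs_nonneg L) (by exact_mod_cast Int.one_le_abs hk0)

lemma pairwise_two_le_dist_add_span_cubeBasis {s L : ℝ} (hs : 0 ≤ s) (hL : L ≠ 0)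
    (hsL : s + 2 ≤ |L|) {X : Finset (EuclideanSpace ℝ (Fin n))} (hXQ : ↑X ⊆ s • unitCube n)
    (hX : (X : Set (EuclideanSpace ℝ (Fin n))).Pairwise (2 ≤ dist · ·)) :
    Pairwise fun q q' : X × span ℤ (Set.range (cubeBasis n hL)) =>
      2 ≤ dist ((q.1 : EuclideanSpace ℝ (Fin n)) + q.2) (q'.1 + q'.2) := by
  rintro ⟨⟨p, hp⟩, ⟨g, hg⟩⟩ ⟨⟨p', hp'⟩, ⟨g', hg'⟩⟩ hne
  by_cases hgg' : g = g'
  · subst hgg'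
    rw [dist_add_right]
    exact hX hp hp' fun h => hne (by subst h; rfl)
  obtain ⟨i, hi⟩ := exists_le_abs_sub_of_mem_span_cubeBasis hL hg hg' hgg'
  obtain ⟨hpi₀, hpis⟩ := mem_Icc_of_mem_smul_unitCube hs (hXQ hp) i
  obtain ⟨hpi₀', hpis'⟩ := mem_Icc_of_mem_smul_unitCube hs (hXQ hp') i
  have hpp' : |p i - p' i| ≤ s := abs_sub_le_iff.2 ⟨by linarith, by linarith⟩
  have := calc
    s + 2 ≤ |g i - g' i| := hsL.trans hi
    _ = |((p + g) i - (p' + g') i) - (p i - p' i)| := by simp only [PiLp.add_apply]; ring_nf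
    _ ≤ |(p + g) i - (p' + g') i| + |p i - p' i| := abs_sub _ _
    _ ≤ dist (p + g) (p' + g') + s :=
      add_le_add (Real.dist_eq _ _ ▸ PiLp.dist_apply_le _ _ i) hpp'
  linarith

theorem pack_smul_unitCube_mul_volume_le {s : ℝ} (hs : 0 ≤ s) (hCb : IsBounded C)
    (hCm : MeasurableSet C) :
    (pack n (s • unitCube n) : ℝ) * (volume C).toReal ≤ pack n C * (s + 2) ^ n := by
  have hL : s + 2 ≠ 0 := by positivity
  obtain ⟨X, hXQ, hX, hXcard⟩ := exists_card_eq_pack (isBounded_unitCube.smul₀ s)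
  have h := card_mul_volume_le_pack_mul_volume_fundamentalDomain (cubeBasis n hL)
    (pairwise_two_le_dist_add_span_cubeBasis hs hL (le_abs_self _) hXQ hX) hCb hCm
  rw [volume_fundamentalDomain_cubeBasis, abs_of_pos (by positivity), hXcard] at h
  have hreal := ENNReal.toReal_mono (by finiteness) h
  rwa [ENNReal.toReal_mul, ENNReal.toReal_mul, ENNReal.toReal_natCast, ENNReal.toReal_natCast,
    ENNReal.toReal_ofReal (by positivity)] at hreal

lemma packDensity_le {A : ℝ}
    (h : ∀ k : ℕ, (pack n ((2 : ℝ) ^ k • unitCube n) : ℝ) ≤ A * (2 ^ k + 2) ^ n) :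
    packDensity n ≤ A := by
  have hle : ∀ k : ℕ, (pack n ((2 : ℝ) ^ k • unitCube n) : ℝ) / 2 ^ (k * n) ≤
      A * (1 + 2 / 2 ^ k) ^ n := fun k => by
    have h2k : (0 : ℝ) < 2 ^ k := by positivity
    rw [div_le_iff₀ (by positivity), pow_mul, mul_assoc, ← mul_pow, add_mul,
      div_mul_cancel₀ _ h2k.ne', one_mul]
    exact h k
  have hlim : Tendsto (fun k : ℕ => A * (1 + 2 / 2 ^ k) ^ n) atTop (𝓝 A) := by
    have := tendsto_const_nhds (x := (2 : ℝ)).div_atTop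
      (tendsto_pow_atTop_atTop_of_one_lt one_lt_two)
    simpa using (((tendsto_const_nhds (x := (1 : ℝ))).add this).pow n).const_mul A
  refine (limsup_le_limsup (Eventually.of_forall hle) ?_ hlim.isBoundedUnder_le).trans
    hlim.limsup_eq.le
  exact isCoboundedUnder_le_of_le atTop fun k => by positivity

theorem pack_euclidean_bound_general (n : ℕ)
    (C : Set (EuclideanSpace ℝ (Fin n))) (hCb : IsBounded C) (hCm : MeasurableSet C) :
    packDensity n * (volume C).toReal ≤ (pack n C : ℝ) := by
  rcases ENNReal.toReal_nonneg.eq_or_lt with hC0 | hC0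
  · rw [← hC0, mul_zero]
    positivity
  have hdens : packDensity n ≤ pack n C / (volume C).toReal :=
    packDensity_le fun k => by
      rw [div_mul_eq_mul_div, le_div_iff₀ hC0]
      exact pack_smul_unitCube_mul_volume_le (by positivity) hCb hCm
  calc packDensity n * (volume C).toReal
      ≤ pack n C / (volume C).toReal * (volume C).toReal := by gcongr
    _ = pack n C := div_mul_cancel₀ _ hC0.ne'

/-- `pack` satisfies the Euclidean bound:
`pack(C) ≥ δ_{pack,n}·L_n(C)` for every bounded Borel `C ⊆ ℝ^n`. -/
theorem pack_euclidean_bound (n : ℕ) (hn : 1 ≤ n)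
    (C : Set (EuclideanSpace ℝ (Fin n))) (hCb : IsBounded C) (hCm : MeasurableSet C) :
    packDensity n * (volume C).toReal ≤ (pack n C : ℝ) :=
  pack_euclidean_bound_general n C hCb hCm
end

section
/- The function cov, assigning to each bounded Borel subset C of each ℝ^d the smallest number cov(C) of open balls of radius 1 (with centers anywhere in ℝ^d) needed to cover C, is a packing bound function; that is, it satisfies the sphere bound, Lipschitz, union, and mesh axioms. -/
open scoped Pointwise
open MeasureTheory Bornology Filter

/-- `cov C` is the smallest number of open unit balls (centered anywhere) needed to cover `C`. -/
noncomputable def cov (d : ℕ) (C : Set (EuclideanSpace ℝ (Fin d))) : ℕ :=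
  sInf {m : ℕ | ∃ X : Finset (EuclideanSpace ℝ (Fin d)),
    X.card = m ∧ C ⊆ ⋃ x ∈ X, Metric.ball x 1}

/-!
Balls of a cover are transported by moving their centres. The sphere bound uses the cover by one
ball; the union axiom splits an optimal cover of `C ∪ C'` into the balls meeting `C` and the rest,
since no unit ball meets both; the mesh axiom scales the centres of a cover of `C'` by `1/(1+ε)`.

For the Lipschitz axiom, each ball `ball x 1` of a cover of `C'` is replaced by a unit ball
containing `C ∩ ψ⁻¹(ball x 1)`. It exists by the Kirszbraun intersection lemma: if `ψ` does not
decrease distances on `S`, the balls `closedBall a (dist (ψ a) y)`, `a ∈ S`, have a common point.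
For finite `S`, a minimiser `w₀` of `max_a (dist w a ^ 2 - dist (ψ a) y ^ 2)` lies in the convex
hull of the tight constraints, and for a point `w = ∑ c_a a` of that hull
`∑ c_a |w - a|² = ½ ∑ c_a c_b |a - b|² ≤ ½ ∑ c_a c_b |ψ a - ψ b|² ≤ ∑ c_a |ψ a - y|²`,
so the minimum is `≤ 0`. Compactness of closed balls passes to infinite `S`.
-/

open Metric Topology RealInnerProductSpace

section Kirszbraun

variable {E F : Type*} [NormedAddCommGroup E] [InnerProductSpace ℝ E]
  [NormedAddCommGroup F] [InnerProductSpace ℝ F]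

theorem Convex.exists_dist_sq_add_dist_sq_le {K : Set E} (hK : Convex ℝ K) (hKc : IsComplete K)
    (hne : K.Nonempty) (w : E) :
    ∃ p ∈ K, ∀ a ∈ K, dist p a ^ 2 + dist w p ^ 2 ≤ dist w a ^ 2 := by
  obtain ⟨p, hpK, hp⟩ := exists_norm_eq_iInf_of_complete_convex hne hKc hK w
  refine ⟨p, hpK, fun a ha => ?_⟩
  have hobtuse := (norm_eq_iInf_iff_real_inner_le_zero hK hpK).1 hp a ha
  have hsplit : w - a = (w - p) - (a - p) := by abel
  rw [dist_eq_norm, dist_eq_norm, dist_eq_norm, hsplit, norm_sub_sq_real (w - p), norm_sub_rev p a]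
  linarith

theorem mem_convexHull_filter_of_forall_exists_le {T : Finset E} {ρ : E → ℝ} {w₀ : E}
    (hle : ∀ a ∈ T, dist w₀ a ^ 2 ≤ ρ a) (hmin : ∀ w, ∃ a ∈ T, ρ a ≤ dist w a ^ 2) :
    w₀ ∈ convexHull ℝ (↑(T.filter fun a => dist w₀ a ^ 2 = ρ a) : Set E) := by
  set K := convexHull ℝ (↑(T.filter fun a => dist w₀ a ^ 2 = ρ a) : Set E)
  by_contra hw₀
  have hKne : K.Nonempty := by
    obtain ⟨a, ha, hρa⟩ := hmin w₀
    exact ⟨a, subset_convexHull ℝ _ (Finset.mem_filter.2 ⟨ha, (hle a ha).antisymm hρa⟩)⟩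
  obtain ⟨p, hpK, hp⟩ := (convex_convexHull ℝ _).exists_dist_sq_add_dist_sq_le
    ((T.filter _).finite_toSet.isCompact_convexHull (𝕜 := ℝ)).isComplete hKne w₀
  have hw₀p : 0 < dist w₀ p := dist_pos.2 fun h => hw₀ (h ▸ hpK)
  -- Moving from `w₀` towards `p` strictly decreases the tight constraints, and the others
  -- have slack.
  have hev : ∀ a ∈ T, ∀ᶠ t in 𝓝[>] (0 : ℝ), dist (AffineMap.lineMap w₀ p t) a ^ 2 < ρ a := by
    intro a ha
    by_cases htight : dist w₀ a ^ 2 = ρ a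
    · have hpa : dist p a < dist w₀ a := by
        have := hp a (subset_convexHull ℝ _ (Finset.mem_filter.2 ⟨ha, htight⟩))
        exact lt_of_pow_lt_pow_left₀ 2 dist_nonneg (by nlinarith)
      filter_upwards [Ioc_mem_nhdsGT one_pos] with t ht
      have hconv := (convexOn_dist a convex_univ).2 (Set.mem_univ w₀) (Set.mem_univ p)
        (sub_nonneg.2 ht.2) ht.1.le (by ring)
      rw [← htight, AffineMap.lineMap_apply_module]
      refine pow_lt_pow_left₀ (hconv.trans_lt ?_) dist_nonneg two_ne_zero
      simp only [smul_eq_mul]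
      nlinarith [ht.1]
    · have hcont : Continuous fun t : ℝ => dist (AffineMap.lineMap w₀ p t) a ^ 2 := by fun_prop
      refine nhdsWithin_le_nhds (hcont.continuousAt.eventually_lt continuousAt_const ?_)
      simpa using lt_of_le_of_ne (hle a ha) htight
  obtain ⟨t, ht⟩ := ((Filter.eventually_all_finset T).2 hev).exists
  obtain ⟨a, ha, hρa⟩ := hmin (AffineMap.lineMap w₀ p t)
  exact (ht a ha).not_ge hρa

theorem sum_sum_mul_norm_sub_sq {ι : Type*} (s : Finset ι) {c : ι → ℝ} (hc : ∑ i ∈ s, c i = 1)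
    (v : ι → F) :
    ∑ i ∈ s, ∑ j ∈ s, c i * c j * ‖v i - v j‖ ^ 2
      = 2 * ∑ i ∈ s, c i * ‖v i‖ ^ 2 - 2 * ‖∑ i ∈ s, c i • v i‖ ^ 2 := by
  have hnorm : ‖∑ i ∈ s, c i • v i‖ ^ 2 = ∑ i ∈ s, ∑ j ∈ s, c i * c j * ⟪v i, v j⟫ := by
    rw [← real_inner_self_eq_norm_sq, sum_inner]
    simp only [inner_sum, real_inner_smul_left, real_inner_smul_right]
    exact Finset.sum_congr rfl fun i _ => Finset.sum_congr rfl fun j _ => by ring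
  have hexpand : ∀ i j, c i * c j * ‖v i - v j‖ ^ 2
      = c j * (c i * ‖v i‖ ^ 2) + c i * (c j * ‖v j‖ ^ 2) - 2 * (c i * c j * ⟪v i, v j⟫) := by
    intro i j
    rw [norm_sub_sq_real]
    ring
  simp only [hexpand, hnorm, Finset.sum_sub_distrib, Finset.sum_add_distrib, ← Finset.sum_mul,
    ← Finset.mul_sum, hc]
  ring

theorem sum_mul_dist_sq_le_of_expanding {s : Finset E} {c : E → ℝ} (hc₀ : ∀ a ∈ s, 0 ≤ c a)
    (hc₁ : ∑ a ∈ s, c a = 1) {φ : E → F} (hφ : ∀ a ∈ s, ∀ b ∈ s, dist a b ≤ dist (φ a) (φ b))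
    (y : F) :
    ∑ a ∈ s, c a * dist (∑ b ∈ s, c b • b) a ^ 2 ≤ ∑ a ∈ s, c a * dist (φ a) y ^ 2 := by
  set w := ∑ b ∈ s, c b • b
  have hcentered : ∑ a ∈ s, c a • (a - w) = 0 := by
    simp only [smul_sub, Finset.sum_sub_distrib, ← Finset.sum_smul, hc₁, one_smul, sub_self, w]
  have hdomain := sum_sum_mul_norm_sub_sq s hc₁ fun a => a - w
  have htarget := sum_sum_mul_norm_sub_sq s hc₁ fun a => φ a - y
  simp only [sub_sub_sub_cancel_right, hcentered, norm_zero] at hdomain htarget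
  have hpair : ∑ a ∈ s, ∑ b ∈ s, c a * c b * ‖a - b‖ ^ 2
      ≤ ∑ a ∈ s, ∑ b ∈ s, c a * c b * ‖φ a - φ b‖ ^ 2 := by
    refine Finset.sum_le_sum fun a ha => Finset.sum_le_sum fun b hb => ?_
    rw [← dist_eq_norm, ← dist_eq_norm]
    exact mul_le_mul_of_nonneg_left (pow_le_pow_left₀ dist_nonneg (hφ a ha b hb) 2)
      (mul_nonneg (hc₀ a ha) (hc₀ b hb))
  simp only [dist_comm w, dist_eq_norm]
  nlinarith [norm_nonneg (∑ a ∈ s, c a • (φ a - y))]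

theorem Finset.exists_forall_sup'_dist_sq_sub_le (T : Finset E) (hT : T.Nonempty) (ρ : E → ℝ) :
    ∃ w₀, ∀ w,
      T.sup' hT (fun a => dist w₀ a ^ 2 - ρ a) ≤ T.sup' hT (fun a => dist w a ^ 2 - ρ a) := by
  have hK := T.finite_toSet.isCompact_convexHull (𝕜 := ℝ)
  have hKne := (Finset.coe_nonempty.2 hT).mono (subset_convexHull ℝ _)
  obtain ⟨w₀, -, hw₀⟩ := hK.exists_isMinOn hKne
    (Continuous.finset_sup'_apply (f := fun a w => dist w a ^ 2 - ρ a) hT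
      fun a _ => by fun_prop).continuousOn
  -- A minimiser on the convex hull of `T` is global: projecting onto the hull brings a point
  -- closer to every point of `T`.
  refine ⟨w₀, fun w => ?_⟩
  obtain ⟨p, hpK, hp⟩ := (convex_convexHull ℝ _).exists_dist_sq_add_dist_sq_le hK.isComplete hKne w
  refine (hw₀ hpK).trans (Finset.sup'_mono_fun fun a ha => ?_)
  nlinarith [hp a (subset_convexHull ℝ _ ha), sq_nonneg (dist w p)]

theorem exists_forall_dist_le_of_expanding_finset (T : Finset E) {φ : E → F}
    (hφ : ∀ a ∈ T, ∀ b ∈ T, dist a b ≤ dist (φ a) (φ b)) (y : F) :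
    ∃ w, ∀ a ∈ T, dist w a ≤ dist (φ a) y := by
  rcases T.eq_empty_or_nonempty with rfl | hT
  · exact ⟨0, by simp⟩
  set g : E → ℝ := fun w => T.sup' hT fun a => dist w a ^ 2 - dist (φ a) y ^ 2
  obtain ⟨w₀, hmin⟩ : ∃ w₀, ∀ w, g w₀ ≤ g w := T.exists_forall_sup'_dist_sq_sub_le hT _
  refine ⟨w₀, fun a ha => ?_⟩
  suffices g w₀ ≤ 0 by
    have := (Finset.le_sup' (fun a => dist w₀ a ^ 2 - dist (φ a) y ^ 2) ha).trans this
    exact (sq_le_sq₀ dist_nonneg dist_nonneg).1 (by linarith)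
  by_contra! hpos
  set m := g w₀
  have hhull := mem_convexHull_filter_of_forall_exists_le (T := T) (w₀ := w₀)
    (ρ := fun a => dist (φ a) y ^ 2 + m)
    (fun a ha => by linarith [Finset.le_sup' (fun a => dist w₀ a ^ 2 - dist (φ a) y ^ 2) ha])
    fun w => by
      obtain ⟨a, ha, hga⟩ := Finset.exists_mem_eq_sup' hT fun a => dist w a ^ 2 - dist (φ a) y ^ 2
      exact ⟨a, ha, by linarith [hmin w, show g w = _ from hga]⟩
  set J := T.filter fun a => dist w₀ a ^ 2 = dist (φ a) y ^ 2 + m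
  obtain ⟨c, hc₀, hc₁, hcw⟩ := Finset.mem_convexHull'.1 hhull
  have hvar := sum_mul_dist_sq_le_of_expanding hc₀ hc₁
    (fun a ha b hb => hφ a (Finset.mem_filter.1 ha).1 b (Finset.mem_filter.1 hb).1) y
  have htight : ∑ a ∈ J, c a * dist w₀ a ^ 2 = ∑ a ∈ J, c a * dist (φ a) y ^ 2 + m :=
    calc ∑ a ∈ J, c a * dist w₀ a ^ 2 = ∑ a ∈ J, (c a * dist (φ a) y ^ 2 + c a * m) :=
          Finset.sum_congr rfl fun a ha => by rw [(Finset.mem_filter.1 ha).2, mul_add]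
      _ = ∑ a ∈ J, c a * dist (φ a) y ^ 2 + m := by
          rw [Finset.sum_add_distrib, ← Finset.sum_mul, hc₁, one_mul]
  rw [hcw, htight] at hvar
  linarith

theorem exists_forall_dist_le_of_expanding [ProperSpace E] (S : Set E) {φ : E → F}
    (hφ : ∀ a ∈ S, ∀ b ∈ S, dist a b ≤ dist (φ a) (φ b)) (y : F) :
    ∃ w, ∀ a ∈ S, dist w a ≤ dist (φ a) y := by
  classical
  rcases S.eq_empty_or_nonempty with rfl | ⟨a₀, ha₀⟩
  · exact ⟨0, by simp⟩
  obtain ⟨w, -, hw⟩ := (isCompact_closedBall a₀ (dist (φ a₀) y)).inter_iInter_nonempty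
    (fun a : S => closedBall (a : E) (dist (φ a) y)) (fun _ => isClosed_closedBall) fun u => by
      have hsub : ∀ a ∈ insert a₀ (u.map (Function.Embedding.subtype _)), a ∈ S := by
        simp only [Finset.mem_insert, Finset.mem_map, Function.Embedding.coe_subtype]
        rintro a (rfl | ⟨a, -, rfl⟩)
        exacts [ha₀, a.2]
      obtain ⟨w, hw⟩ := exists_forall_dist_le_of_expanding_finset _
        (fun a ha b hb => hφ a (hsub a ha) b (hsub b hb)) y
      refine ⟨w, hw a₀ (Finset.mem_insert_self _ _), Set.mem_iInter₂.2 fun a ha => ?_⟩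
      exact hw a (Finset.mem_insert_of_mem (Finset.mem_map_of_mem _ ha))
  exact ⟨w, fun a ha => Set.mem_iInter.1 hw ⟨a, ha⟩⟩

end Kirszbraun

section Cov

local notation "ℝ^" d:max => EuclideanSpace ℝ (Fin d)

variable {d d' : ℕ}

theorem cov_le_card {C : Set (ℝ^d)} (X : Finset (ℝ^d)) (hX : C ⊆ ⋃ x ∈ X, ball x 1) :
    cov d C ≤ X.card :=
  Nat.sInf_le ⟨X, rfl, hX⟩

theorem exists_card_eq_cov {C : Set (ℝ^d)} (hC : IsBounded C) :
    ∃ X : Finset (ℝ^d), X.card = cov d C ∧ C ⊆ ⋃ x ∈ X, ball x 1 := by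
  obtain ⟨t, ht, hCt⟩ := totallyBounded_iff.1
    (hC.isCompact_closure.totallyBounded.subset subset_closure) 1 one_pos
  exact Nat.sInf_mem (s := {m | ∃ X : Finset (ℝ^d), X.card = m ∧ C ⊆ ⋃ x ∈ X, ball x 1})
    ⟨_, ht.toFinset, rfl, by simpa using hCt⟩

theorem cov_le_cov_of_forall_exists {C : Set (ℝ^d)} {C' : Set (ℝ^d')} (hC' : IsBounded C')
    (f : ℝ^d' → ℝ^d) (h : ∀ p ∈ C, ∃ q ∈ C', ∀ x, q ∈ ball x 1 → p ∈ ball (f x) 1) :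
    cov d C ≤ cov d' C' := by
  classical
  obtain ⟨X, hXcard, hX⟩ := exists_card_eq_cov hC'
  refine (cov_le_card (X.image f) fun p hp => ?_).trans (hXcard ▸ Finset.card_image_le)
  obtain ⟨q, hq, hpq⟩ := h p hp
  obtain ⟨x, hx, hqx⟩ := Set.mem_iUnion₂.1 (hX hq)
  exact Set.mem_iUnion₂.2 ⟨f x, Finset.mem_image_of_mem f hx, hpq x hqx⟩

theorem cov_eq_one {C : Set (ℝ^d)} (hne : C.Nonempty) {z : ℝ^d} (hz : C ⊆ ball z 1) :
    cov d C = 1 := by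
  refine le_antisymm (by simpa using cov_le_card {z} (by simpa using hz)) ?_
  refine Nat.one_le_iff_ne_zero.2 fun h0 => ?_
  obtain ⟨X, hXcard, hX⟩ := exists_card_eq_cov (isBounded_ball.subset hz)
  rw [h0, Finset.card_eq_zero] at hXcard
  obtain ⟨p, hp⟩ := hne
  simpa [hXcard] using hX hp

theorem cov_union_le {C C' : Set (ℝ^d)} (hC : IsBounded C) (hC' : IsBounded C') :
    cov d (C ∪ C') ≤ cov d C + cov d C' := by
  classical
  obtain ⟨X, hXcard, hX⟩ := exists_card_eq_cov hC
  obtain ⟨X', hXcard', hX'⟩ := exists_card_eq_cov hC'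
  refine (cov_le_card (X ∪ X') ?_).trans (hXcard ▸ hXcard' ▸ Finset.card_union_le X X')
  rw [Finset.set_biUnion_union]
  exact Set.union_subset_union hX hX'

theorem cov_add_cov_le_of_two_le_dist {C C' : Set (ℝ^d)}
    (hCC' : IsBounded (C ∪ C')) (hsep : ∀ x ∈ C, ∀ x' ∈ C', 2 ≤ dist x x') :
    cov d C + cov d C' ≤ cov d (C ∪ C') := by
  classical
  obtain ⟨Y, hYcard, hY⟩ := exists_card_eq_cov hCC'
  set P : ℝ^d → Prop := fun y => ∃ p ∈ C, p ∈ ball y 1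
  have hcovC : C ⊆ ⋃ y ∈ Y.filter P, ball y 1 := fun p hp => by
    obtain ⟨y, hy, hpy⟩ := Set.mem_iUnion₂.1 (hY (Or.inl hp))
    exact Set.mem_iUnion₂.2 ⟨y, Finset.mem_filter.2 ⟨hy, p, hp, hpy⟩, hpy⟩
  have hcovC' : C' ⊆ ⋃ y ∈ Y.filter (¬P ·), ball y 1 := fun p' hp' => by
    obtain ⟨y, hy, hp'y⟩ := Set.mem_iUnion₂.1 (hY (Or.inr hp'))
    refine Set.mem_iUnion₂.2 ⟨y, Finset.mem_filter.2 ⟨hy, ?_⟩, hp'y⟩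
    rintro ⟨p, hp, hpy⟩
    have := dist_triangle_right p p' y
    linarith [hsep p hp p' hp', mem_ball.1 hpy, mem_ball.1 hp'y]
  rw [← hYcard, ← Finset.card_filter_add_card_filter_not P]
  exact add_le_add (cov_le_card _ hcovC) (cov_le_card _ hcovC')

theorem cov_smul_le_of_subset_thickening {ε : ℝ} (hε : 0 < ε) {C C' : Set (ℝ^d)}
    (hC' : IsBounded C') (hCC' : C ⊆ thickening ε C') : cov d ((1 / (1 + ε)) • C) ≤ cov d C' := by
  refine cov_le_cov_of_forall_exists hC' (fun x => (1 / (1 + ε)) • x) ?_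
  rintro _ ⟨p, hp, rfl⟩
  obtain ⟨q, hq, hpq⟩ := mem_thickening_iff.1 (hCC' hp)
  refine ⟨q, hq, fun x hqx => ?_⟩
  have hpx : dist p x < 1 + ε := by linarith [dist_triangle p q x, mem_ball.1 hqx]
  rwa [mem_ball, dist_smul₀, Real.norm_of_nonneg (by positivity), one_div,
    inv_mul_lt_iff₀ (by positivity), mul_one]

theorem cov_le_of_expanding {C : Set (ℝ^d)} {C' : Set (ℝ^d')}
    (hC' : IsBounded C') {ψ : ℝ^d → ℝ^d'} (hψC : ∀ x ∈ C, ψ x ∈ C')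
    (hψ : ∀ x ∈ C, ∀ y ∈ C, dist x y ≤ dist (ψ x) (ψ y)) : cov d C ≤ cov d' C' := by
  choose f hf using fun x => exists_forall_dist_le_of_expanding {p ∈ C | ψ p ∈ ball x 1}
    (fun a ha b hb => hψ a ha.1 b hb.1) x
  refine cov_le_cov_of_forall_exists hC' f fun p hp => ⟨ψ p, hψC p hp, fun x hpx => ?_⟩
  rw [mem_ball, dist_comm]
  exact (hf x p ⟨hp, hpx⟩).trans_lt hpx

end Cov

/-- `cov` is a packing bound function: it satisfies the sphere bound,
Lipschitz, union, and mesh axioms. -/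
theorem cov_isPackingBoundFunction :
    ∃ A : PackingBoundFunction,
      A.toFun = fun d (C : Set (EuclideanSpace ℝ (Fin d))) => (cov d C : ℝ) := by
  refine ⟨⟨fun d C => (cov d C : ℝ), ?nonneg, ?sphere_bound, ?lipschitz, ?union, ?mesh⟩, rfl⟩
  case nonneg => exact fun d C _ _ => Nat.cast_nonneg _
  case sphere_bound =>
    rintro d C - - hne ⟨z, hz⟩
    exact_mod_cast cov_eq_one hne hz
  case lipschitz =>
    rintro d d' C C' - - hC' - ⟨ψ, hψC, hψ⟩
    exact_mod_cast cov_le_of_expanding hC' hψC hψ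
  case union =>
    rintro d C C' hC - hC' - hsep
    exact_mod_cast (cov_union_le hC hC').antisymm
      (cov_add_cov_le_of_two_le_dist (hC.union hC') hsep)
  case mesh =>
    rintro ε hε d C C' - - hC' - hCC'
    exact_mod_cast cov_smul_le_of_subset_thickening hε hC' hCC'
end

section
/- Let G and H be finite loopless undirected graphs and let f : V(G) → V(H) be a map such that (i) whenever f(x)f(y) is an edge of H, xy is an edge of G, and (ii) the preimage of each vertex of H is a clique in G (any two distinct vertices of G with the same image under f are adjacent in G). Then ϑ(G) ≤ ϑ(H), ϑ'(G) ≤ ϑ'(H), and ϑ⁺(G) ≤ ϑ⁺(H). -/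
/-! The two hypotheses on `f` say precisely that `f` is a graph homomorphism `Gᶜ →g Hᶜ`.
Push a matrix `M` feasible for `G` forward along `f`: `N u v = ∑_{f x = u, f y = v} M x y`,
i.e. `N = Aᵀ M A` for the `0/1` matrix `A` of `f`. Then `N` is positive semidefinite with the same
entry sum as `M`; an entry of `N` on an `H`-edge only collects entries of `M` on `G`-edges, and
`tr N` differs from `tr M` only by entries of `M` inside fibres of `f`, which are again on `G`-edges.
So `N` is feasible for `H`, except that for `ϑ⁺` only `tr N ≤ 1` holds; rescaling `N` to trace
one gives `∑ N ≤ tr N · ϑ⁺(H) ≤ ϑ⁺(H)`. -/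

open scoped Pointwise
open MeasureTheory Bornology Filter

/-- The Lovász theta variant `ϑ⁺` of a finite graph: the maximum of the sum of entries of a
real symmetric positive semidefinite matrix of trace 1 whose entries are nonpositive on edges. -/
noncomputable def thetaPlus {V : Type} [Fintype V] (G : SimpleGraph V) : ℝ :=
  sSup {t : ℝ | ∃ M : Matrix V V ℝ, M.PosSemidef ∧ M.trace = 1 ∧
    (∀ i j, G.Adj i j → M i j ≤ 0) ∧ t = ∑ i, ∑ j, M i j}

/-- The Lovász theta function `ϑ` of a finite graph. -/
noncomputable def theta {V : Type} [Fintype V] (G : SimpleGraph V) : ℝ :=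
  sSup {t : ℝ | ∃ M : Matrix V V ℝ, M.PosSemidef ∧ M.trace = 1 ∧
    (∀ i j, G.Adj i j → M i j = 0) ∧ t = ∑ i, ∑ j, M i j}

/-- The Lovász theta variant `ϑ'` of a finite graph. -/
noncomputable def thetaPrime {V : Type} [Fintype V] (G : SimpleGraph V) : ℝ :=
  sSup {t : ℝ | ∃ M : Matrix V V ℝ, M.PosSemidef ∧ M.trace = 1 ∧
    (∀ i j, G.Adj i j → M i j = 0) ∧ (∀ i j, 0 ≤ M i j) ∧ t = ∑ i, ∑ j, M i j}

open Finset Matrix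

namespace Matrix

variable {n : Type*} [Fintype n]

namespace PosSemidef

variable {M : Matrix n n ℝ}

lemma two_mul_apply_le (hM : M.PosSemidef) (i j : n) : 2 * M i j ≤ M i i + M j j := by
  classical
  have hsymm : M j i = M i j := hM.1.apply i j
  have := hM.dotProduct_mulVec_nonneg (Pi.single i 1 - Pi.single j 1)
  simp [mulVec_sub, dotProduct_sub, sub_dotProduct, hsymm] at this
  linarith

lemma sum_apply_nonneg (hM : M.PosSemidef) : 0 ≤ ∑ i, ∑ j, M i j := by
  simpa [dotProduct, mulVec] using hM.dotProduct_mulVec_nonneg (fun _ => 1)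

lemma sum_apply_le_card_mul_trace (hM : M.PosSemidef) :
    ∑ i, ∑ j, M i j ≤ Fintype.card n * M.trace := by
  have key : ∑ i, ∑ j, 2 * M i j ≤ ∑ i : n, ∑ j : n, (M i i + M j j) :=
    sum_le_sum fun i _ => sum_le_sum fun j _ => hM.two_mul_apply_le i j
  simp only [sum_add_distrib, sum_const, card_univ, nsmul_eq_mul, ← mul_sum] at key
  simp only [trace, diag_apply]
  linarith

end PosSemidef

variable {V W : Type*} [Fintype V] [DecidableEq W] (f : V → W)

def fiberIndicator (R : Type*) [Zero R] [One R] : Matrix V W R :=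
  of fun x u => if f x = u then 1 else 0

section Semiring

variable {R : Type*} [CommSemiring R] (M : Matrix V V R)

def pushforward : Matrix W W R :=
  (fiberIndicator f R)ᵀ * M * fiberIndicator f R

lemma pushforward_apply (u v : W) :
    pushforward f M u v = ∑ x with f x = u, ∑ y with f y = v, M x y := by
  simp only [pushforward, fiberIndicator, mul_apply, transpose_apply, of_apply, ite_mul, mul_ite,
    one_mul, mul_one, zero_mul, mul_zero, ← sum_filter]
  exact sum_comm

lemma sum_pushforward [Fintype W] : ∑ u, ∑ v, pushforward f M u v = ∑ x, ∑ y, M x y := by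
  simp only [pushforward_apply]
  rw [sum_congr rfl fun u _ => sum_comm]
  simp only [sum_fiberwise]

lemma trace_pushforward [DecidableEq V] [Fintype W] :
    (pushforward f M).trace
      = M.trace + ∑ x, ∑ y ∈ ({y | f y = f x} : Finset V).erase x, M x y := by
  have hfiber (u : W) : ∑ x with f x = u, ∑ y with f y = u, M x y
      = ∑ x with f x = u, ∑ y with f y = f x, M x y :=
    sum_congr rfl fun x hx => by rw [(mem_filter.1 hx).2]
  simp only [trace, diag_apply, pushforward_apply, hfiber, sum_fiberwise, ← sum_add_distrib]
  exact sum_congr rfl fun x _ => (add_sum_erase _ _ (by simp)).symm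

end Semiring

lemma PosSemidef.pushforward [Finite W] {R : Type*} [CommRing R] [PartialOrder R] [StarRing R]
    [TrivialStar R] {M : Matrix V V R} (hM : M.PosSemidef) : (M.pushforward f).PosSemidef := by
  simpa [Matrix.pushforward, conjTranspose_eq_transpose_of_trivial] using
    hM.conjTranspose_mul_mul_same (fiberIndicator f R)

end Matrix

section Theta

variable {V : Type} [Fintype V] (G : SimpleGraph V)

lemma theta_nonneg : 0 ≤ theta G :=
  Real.sSup_nonneg <| by rintro _ ⟨M, hM, -, -, rfl⟩; exact hM.sum_apply_nonneg

lemma thetaPrime_nonneg : 0 ≤ thetaPrime G :=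
  Real.sSup_nonneg <| by rintro _ ⟨M, hM, -, -, -, rfl⟩; exact hM.sum_apply_nonneg

lemma thetaPlus_nonneg : 0 ≤ thetaPlus G :=
  Real.sSup_nonneg <| by rintro _ ⟨M, hM, -, -, rfl⟩; exact hM.sum_apply_nonneg

variable {G} {M : Matrix V V ℝ}

lemma sum_le_theta (hM : M.PosSemidef) (htr : M.trace = 1)
    (hadj : ∀ i j, G.Adj i j → M i j = 0) : ∑ i, ∑ j, M i j ≤ theta G :=
  le_csSup ⟨Fintype.card V, by
    rintro _ ⟨N, hN, hNtr, -, rfl⟩; simpa [hNtr] using hN.sum_apply_le_card_mul_trace⟩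
    ⟨M, hM, htr, hadj, rfl⟩

lemma sum_le_thetaPrime (hM : M.PosSemidef) (htr : M.trace = 1)
    (hadj : ∀ i j, G.Adj i j → M i j = 0) (hnonneg : ∀ i j, 0 ≤ M i j) :
    ∑ i, ∑ j, M i j ≤ thetaPrime G :=
  le_csSup ⟨Fintype.card V, by
    rintro _ ⟨N, hN, hNtr, -, -, rfl⟩; simpa [hNtr] using hN.sum_apply_le_card_mul_trace⟩
    ⟨M, hM, htr, hadj, hnonneg, rfl⟩

lemma sum_le_thetaPlus (hM : M.PosSemidef) (htr : M.trace = 1)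
    (hadj : ∀ i j, G.Adj i j → M i j ≤ 0) : ∑ i, ∑ j, M i j ≤ thetaPlus G :=
  le_csSup ⟨Fintype.card V, by
    rintro _ ⟨N, hN, hNtr, -, rfl⟩; simpa [hNtr] using hN.sum_apply_le_card_mul_trace⟩
    ⟨M, hM, htr, hadj, rfl⟩

lemma sum_le_trace_mul_thetaPlus (hM : M.PosSemidef) (hadj : ∀ i j, G.Adj i j → M i j ≤ 0) :
    ∑ i, ∑ j, M i j ≤ M.trace * thetaPlus G := by
  rcases hM.trace_nonneg.eq_or_lt with htr | htr
  · simpa [← htr] using hM.sum_apply_le_card_mul_trace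
  have hscaled := sum_le_thetaPlus (hM.smul (inv_nonneg.2 htr.le))
    (by rw [trace_smul, smul_eq_mul, inv_mul_cancel₀ htr.ne'])
    (fun i j hij => mul_nonpos_of_nonneg_of_nonpos (inv_nonneg.2 htr.le) (hadj i j hij))
  simp only [Matrix.smul_apply, smul_eq_mul, ← mul_sum] at hscaled
  rwa [inv_mul_le_iff₀ htr] at hscaled

end Theta

namespace SimpleGraph.Hom

variable {V W : Type*} {G : SimpleGraph V} {H : SimpleGraph W} (φ : Gᶜ →g Hᶜ)

lemma adj_of_adj_map {x y : V} (h : H.Adj (φ x) (φ y)) : G.Adj x y := by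
  by_contra hxy
  exact ((compl_adj _ _ _).1 (φ.map_adj ((compl_adj _ _ _).2
    ⟨fun e => h.ne (congrArg φ e), hxy⟩))).2 h

lemma adj_of_map_eq {x y : V} (hne : x ≠ y) (h : φ x = φ y) : G.Adj x y := by
  by_contra hxy
  exact ((compl_adj _ _ _).1 (φ.map_adj ((compl_adj _ _ _).2 ⟨hne, hxy⟩))).1 h

end SimpleGraph.Hom

section ComplHom

variable {V W : Type} [Fintype V] {G : SimpleGraph V} {H : SimpleGraph W}

section Pushforward

variable (φ : Gᶜ →g Hᶜ) {M : Matrix V V ℝ} [DecidableEq W]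

lemma pushforward_apply_eq_zero_of_adj (hadj : ∀ x y, G.Adj x y → M x y = 0) {u v : W}
    (huv : H.Adj u v) : M.pushforward φ u v = 0 := by
  rw [pushforward_apply]
  refine sum_eq_zero fun x hx => sum_eq_zero fun y hy => hadj x y (φ.adj_of_adj_map ?_)
  rwa [(mem_filter.1 hx).2, (mem_filter.1 hy).2]

lemma pushforward_apply_nonpos_of_adj (hadj : ∀ x y, G.Adj x y → M x y ≤ 0) {u v : W}
    (huv : H.Adj u v) : M.pushforward φ u v ≤ 0 := by
  rw [pushforward_apply]
  refine sum_nonpos fun x hx => sum_nonpos fun y hy => hadj x y (φ.adj_of_adj_map ?_)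
  rwa [(mem_filter.1 hx).2, (mem_filter.1 hy).2]

variable [DecidableEq V] [Fintype W]

lemma trace_pushforward_eq_of_adj_eq_zero (hadj : ∀ x y, G.Adj x y → M x y = 0) :
    (M.pushforward φ).trace = M.trace := by
  rw [trace_pushforward, add_eq_left]
  refine sum_eq_zero fun x _ => sum_eq_zero fun y hy => hadj x y ?_
  obtain ⟨hne, hy⟩ := mem_erase.1 hy
  exact φ.adj_of_map_eq (Ne.symm hne) (mem_filter.1 hy).2.symm

lemma trace_pushforward_le_of_adj_nonpos (hadj : ∀ x y, G.Adj x y → M x y ≤ 0) :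
    (M.pushforward φ).trace ≤ M.trace := by
  rw [trace_pushforward, add_le_iff_nonpos_right]
  refine sum_nonpos fun x _ => sum_nonpos fun y hy => hadj x y ?_
  obtain ⟨hne, hy⟩ := mem_erase.1 hy
  exact φ.adj_of_map_eq (Ne.symm hne) (mem_filter.1 hy).2.symm

end Pushforward

variable [Fintype W]

lemma theta_le_of_compl_hom (φ : Gᶜ →g Hᶜ) : theta G ≤ theta H := by
  classical
  refine Real.sSup_le ?_ (theta_nonneg H)
  rintro _ ⟨M, hM, htr, hadj, rfl⟩
  rw [← sum_pushforward φ M]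
  exact sum_le_theta (hM.pushforward φ) (by rw [trace_pushforward_eq_of_adj_eq_zero φ hadj, htr])
    fun _ _ => pushforward_apply_eq_zero_of_adj φ hadj

lemma thetaPrime_le_of_compl_hom (φ : Gᶜ →g Hᶜ) : thetaPrime G ≤ thetaPrime H := by
  classical
  refine Real.sSup_le ?_ (thetaPrime_nonneg H)
  rintro _ ⟨M, hM, htr, hadj, hnonneg, rfl⟩
  rw [← sum_pushforward φ M]
  refine sum_le_thetaPrime (hM.pushforward φ)
    (by rw [trace_pushforward_eq_of_adj_eq_zero φ hadj, htr])
    (fun _ _ => pushforward_apply_eq_zero_of_adj φ hadj) fun u v => ?_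
  rw [pushforward_apply]
  exact sum_nonneg fun x _ => sum_nonneg fun y _ => hnonneg x y

lemma thetaPlus_le_of_compl_hom (φ : Gᶜ →g Hᶜ) : thetaPlus G ≤ thetaPlus H := by
  classical
  refine Real.sSup_le ?_ (thetaPlus_nonneg H)
  rintro _ ⟨M, hM, htr, hadj, rfl⟩
  have htrace : (M.pushforward φ).trace ≤ 1 := htr ▸ trace_pushforward_le_of_adj_nonpos φ hadj
  calc ∑ x, ∑ y, M x y = ∑ u, ∑ v, M.pushforward φ u v := (sum_pushforward φ M).symm
    _ ≤ (M.pushforward φ).trace * thetaPlus H :=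
      sum_le_trace_mul_thetaPlus (hM.pushforward φ) fun _ _ =>
        pushforward_apply_nonpos_of_adj φ hadj
    _ ≤ thetaPlus H := mul_le_of_le_one_left (thetaPlus_nonneg H) htrace

end ComplHom

/-- Functoriality of the theta functions: if `f : V(G) → V(H)` pulls
edges back to edges and has clique preimages of vertices, then
`ϑ(G) ≤ ϑ(H)`, `ϑ'(G) ≤ ϑ'(H)`, and `ϑ⁺(G) ≤ ϑ⁺(H)`. -/
theorem theta_functorial {V W : Type} [Fintype V] [Fintype W]
    (G : SimpleGraph V) (H : SimpleGraph W) (f : V → W)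
    (hedge : ∀ x y, H.Adj (f x) (f y) → G.Adj x y)
    (hclique : ∀ x y, x ≠ y → f x = f y → G.Adj x y) :
    theta G ≤ theta H ∧ thetaPrime G ≤ thetaPrime H ∧ thetaPlus G ≤ thetaPlus H := by
  let φ : Gᶜ →g Hᶜ :=
    ⟨f, fun {x y} hxy => by
      obtain ⟨hne, hnadj⟩ := (G.compl_adj x y).1 hxy
      exact (H.compl_adj _ _).2
        ⟨fun h => hnadj (hclique x y hne h), fun h => hnadj (hedge x y h)⟩⟩
  exact ⟨theta_le_of_compl_hom φ, thetaPrime_le_of_compl_hom φ, thetaPlus_le_of_compl_hom φ⟩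
end
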